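/- For 3 < γ ≤ 4, β_γ ≤ √((γ-3)/γ), where β_γ = √(-1/2 + 3/γ - √(12-3γ)/(2√γ)). -/

import Mathlib

open Real

noncomputable def betaGamma (γ : ℝ) : ℝ :=
  Real.sqrt (-1/2 + 3/γ - Real.sqrt (12 - 3*γ) / (2 * Real.sqrt γ))

lemma betaGamma_radicand_eq {γ : ℝ} (hγ : 0 < γ) :
    -1/2 + 3/γ - √(12 - 3*γ) / (2 * √γ) =
      (γ - 3)/γ - (√((12 - 3*γ)/γ) - (12 - 3*γ)/γ) / 2 := by
  rw [Real.sqrt_div' _ hγ.le]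
  field_simp
  ring

theorem beta_le_sqrt_general (γ : ℝ) (hγ3 : 3 < γ) :
    betaGamma γ ≤ Real.sqrt ((γ - 3)/γ) := by
  have hγ : 0 < γ := by linarith
  have hle : (12 - 3*γ)/γ ≤ √((12 - 3*γ)/γ) :=
    Real.le_sqrt_self_iff.mpr ((div_le_one hγ).mpr (by linarith))
  refine Real.sqrt_le_sqrt ?_
  rw [betaGamma_radicand_eq hγ]
  linarith

theorem beta_le_sqrt (γ : ℝ) (hγ3 : 3 < γ) (hγ4 : γ ≤ 4) :
    betaGamma γ ≤ Real.sqrt ((γ - 3)/γ) :=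
  beta_le_sqrt_general γ hγ3
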